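/- The bounded until of TPTLbP is equivalent to its guarded TPTLP translation: for every timed state sequence ρ, environment ξ, position i ≥ 0, finite bound w ∈ ℕ, and formulae φ₁, φ₂ with x, y, z fresh in φ₁ and φ₂, ρ ⊨^i_ξ φ₁ U_w φ₂ if and only if ρ ⊨^i_ξ x.( z.(z ≤ x + w → φ₁) U y.(y ≤ x + w ∧ φ₂) ). -/

import Mathlib

namespace TPTL

/-- Syntax of TPTLP (plain operators) together with the bounded operators of TPTLbP.
    `le x y c` is the timing constraint `x ≤ y + c`, `leC x c` is `x ≤ c`,
    `cong m x y c` is `x ≡_m y + c`.  Bounds of bounded operators live in `ℕ∞`. -/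
inductive Formula : Type
  | tt | ff
  | prop : ℕ → Formula
  | neg : Formula → Formula
  | or : Formula → Formula → Formula
  | and : Formula → Formula → Formula
  | freeze : ℕ → Formula → Formula
  | le : ℕ → ℕ → ℤ → Formula
  | leC : ℕ → ℤ → Formula
  | cong : ℕ → ℕ → ℕ → ℤ → Formula
  | nxt : Formula → Formula
  | untl : Formula → Formula → Formula
  | rel : Formula → Formula → Formula
  | yst : Formula → Formula
  | snc : Formula → Formula → Formula
  | trg : Formula → Formula → Formula
  | nxtB : ℕ∞ → Formula → Formula
  | wnxtB : ℕ∞ → Formula → Formula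
  | untlB : ℕ∞ → Formula → Formula → Formula
  | relB : ℕ∞ → Formula → Formula → Formula
  | ystB : ℕ∞ → Formula → Formula
  | wystB : ℕ∞ → Formula → Formula
  | sncB : ℕ∞ → Formula → Formula → Formula
  | trgB : ℕ∞ → Formula → Formula → Formula
deriving DecidableEq

/-- Timed state sequences: infinite sequences of states and of monotone, progressing
    natural-number timestamps. -/
structure TSS where
  σ : ℕ → Set ℕ
  τ : ℕ → ℕ
  mono : ∀ i, τ i ≤ τ (i+1)
  progress : ∀ t : ℕ, ∃ i, t ≤ τ i

/-- Environments map variables to (integer) time values. -/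
abbrev Env := ℕ → ℤ

/-- Satisfaction `ρ ⊨^i_ξ φ` for TPTLP and the bounded TPTLbP operators. -/
def sat (ρ : TSS) : Formula → ℕ → Env → Prop
  | .tt, _, _ => True
  | .ff, _, _ => False
  | .prop p, i, _ => p ∈ ρ.σ i
  | .neg φ, i, ξ => ¬ sat ρ φ i ξ
  | .or φ ψ, i, ξ => sat ρ φ i ξ ∨ sat ρ ψ i ξ
  | .and φ ψ, i, ξ => sat ρ φ i ξ ∧ sat ρ ψ i ξ
  | .freeze x φ, i, ξ => sat ρ φ i (Function.update ξ x (ρ.τ i : ℤ))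
  | .le x y c, _, ξ => ξ x ≤ ξ y + c
  | .leC x c, _, ξ => ξ x ≤ c
  | .cong m x y c, _, ξ => (ξ x) % (m : ℤ) = (ξ y + c) % (m : ℤ)
  | .nxt φ, i, ξ => sat ρ φ (i+1) ξ
  | .untl φ ψ, i, ξ => ∃ j, i ≤ j ∧ sat ρ ψ j ξ ∧ ∀ k, i ≤ k → k < j → sat ρ φ k ξ
  | .rel φ ψ, i, ξ => (∀ j, i ≤ j → sat ρ ψ j ξ) ∨
      ∃ k, i ≤ k ∧ sat ρ φ k ξ ∧ ∀ j, i ≤ j → j ≤ k → sat ρ ψ j ξ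
  | .yst φ, i, ξ => 0 < i ∧ sat ρ φ (i-1) ξ
  | .snc φ ψ, i, ξ => ∃ j, j ≤ i ∧ sat ρ ψ j ξ ∧ ∀ k, j < k → k ≤ i → sat ρ φ k ξ
  | .trg φ ψ, i, ξ => (∀ j, j ≤ i → sat ρ ψ j ξ) ∨
      ∃ k, k ≤ i ∧ sat ρ φ k ξ ∧ ∀ j, k ≤ j → j ≤ i → sat ρ ψ j ξ
  | .nxtB w φ, i, ξ => ((ρ.τ (i+1) - ρ.τ i : ℕ) : ℕ∞) ≤ w ∧ sat ρ φ (i+1) ξ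
  | .wnxtB w φ, i, ξ => ((ρ.τ (i+1) - ρ.τ i : ℕ) : ℕ∞) ≤ w → sat ρ φ (i+1) ξ
  | .untlB w φ ψ, i, ξ => ∃ j, i ≤ j ∧ ((ρ.τ j - ρ.τ i : ℕ) : ℕ∞) ≤ w ∧ sat ρ ψ j ξ ∧
      ∀ k, i ≤ k → k < j → sat ρ φ k ξ
  | .relB w φ ψ, i, ξ => (∀ j, i ≤ j → ((ρ.τ j - ρ.τ i : ℕ) : ℕ∞) ≤ w → sat ρ ψ j ξ) ∨
      ∃ k, i ≤ k ∧ ((ρ.τ k - ρ.τ i : ℕ) : ℕ∞) ≤ w ∧ sat ρ φ k ξ ∧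
        ∀ j, i ≤ j → j ≤ k → sat ρ ψ j ξ
  | .ystB w φ, i, ξ => 0 < i ∧ ((ρ.τ i - ρ.τ (i-1) : ℕ) : ℕ∞) ≤ w ∧ sat ρ φ (i-1) ξ
  | .wystB w φ, i, ξ => (0 < i ∧ ((ρ.τ i - ρ.τ (i-1) : ℕ) : ℕ∞) ≤ w) → sat ρ φ (i-1) ξ
  | .sncB w φ ψ, i, ξ => ∃ j, j ≤ i ∧ ((ρ.τ i - ρ.τ j : ℕ) : ℕ∞) ≤ w ∧ sat ρ ψ j ξ ∧
      ∀ k, j < k → k ≤ i → sat ρ φ k ξ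
  | .trgB w φ ψ, i, ξ => (∀ j, j ≤ i → ((ρ.τ i - ρ.τ j : ℕ) : ℕ∞) ≤ w → sat ρ ψ j ξ) ∨
      ∃ k, k ≤ i ∧ ((ρ.τ i - ρ.τ k : ℕ) : ℕ∞) ≤ w ∧ sat ρ φ k ξ ∧
        ∀ j, k ≤ j → j ≤ i → sat ρ ψ j ξ

/-- Free occurrence of a variable in a formula. -/
def FreeIn (v : ℕ) : Formula → Prop
  | .tt | .ff | .prop _ => False
  | .neg φ | .nxt φ | .yst φ => FreeIn v φ
  | .nxtB _ φ | .wnxtB _ φ | .ystB _ φ | .wystB _ φ => FreeIn v φ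
  | .or φ ψ | .and φ ψ | .untl φ ψ | .rel φ ψ | .snc φ ψ | .trg φ ψ => FreeIn v φ ∨ FreeIn v ψ
  | .untlB _ φ ψ | .relB _ φ ψ | .sncB _ φ ψ | .trgB _ φ ψ => FreeIn v φ ∨ FreeIn v ψ
  | .freeze x φ => v ≠ x ∧ FreeIn v φ
  | .le x y _ => v = x ∨ v = y
  | .leC x _ => v = x
  | .cong _ x y _ => v = x ∨ v = y

/-- A formula is closed if no variable occurs free in it. -/
def Closed (φ : Formula) : Prop := ∀ v, ¬ FreeIn v φ

/-- Material implication, as a shortcut. -/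
def Formula.imp (a b : Formula) : Formula := .or (.neg a) b

theorem sat_congr (ρ : TSS) (φ : Formula) {ξ ξ' : Env} (h : ∀ v, FreeIn v φ → ξ v = ξ' v)
    (i : ℕ) : sat ρ φ i ξ ↔ sat ρ φ i ξ' := by
  induction φ generalizing ξ ξ' i with
  | tt | ff | prop => rfl
  | le a b | cong _ a b => simp only [sat, h a (.inl rfl), h b (.inr rfl)]
  | leC a => simp only [sat, h a rfl]
  | freeze x φ ih =>
    refine ih (fun v hv => ?_) i
    by_cases hvx : v = x
    · simp only [hvx, Function.update_self]
    · simp only [Function.update_of_ne hvx, h v ⟨hvx, hv⟩]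
  | neg _ ih | nxt _ ih | yst _ ih | nxtB _ _ ih | wnxtB _ _ ih | ystB _ _ ih | wystB _ _ ih =>
    simp only [sat, ih h]
  | or _ _ ih₁ ih₂ | and _ _ ih₁ ih₂ | untl _ _ ih₁ ih₂ | rel _ _ ih₁ ih₂ | snc _ _ ih₁ ih₂
  | trg _ _ ih₁ ih₂ | untlB _ _ _ ih₁ ih₂ | relB _ _ _ ih₁ ih₂ | sncB _ _ _ ih₁ ih₂
  | trgB _ _ _ ih₁ ih₂ =>
    simp only [sat, ih₁ fun v hv => h v (.inl hv), ih₂ fun v hv => h v (.inr hv)]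

theorem sat_update_of_not_freeIn (ρ : TSS) {φ : Formula} {v : ℕ} (hv : ¬ FreeIn v φ)
    (ξ : Env) (t : ℤ) (i : ℕ) : sat ρ φ i (Function.update ξ v t) ↔ sat ρ φ i ξ :=
  sat_congr ρ φ (fun u hu => Function.update_of_ne (fun huv : u = v => hv (huv ▸ hu)) t ξ) i

theorem TSS.monotone_τ (ρ : TSS) : Monotone ρ.τ :=
  monotone_nat_of_le_succ ρ.mono

section GuardedFreeze

variable (ρ : TSS) {φ : Formula} {x y : ℕ} {ξ : Env} {t c : ℤ} {j : ℕ}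

theorem sat_freeze_guard_and (hxy : x ≠ y) (hx : ¬ FreeIn x φ) (hy : ¬ FreeIn y φ) :
    sat ρ (.freeze y (.and (.le y x c) φ)) j (Function.update ξ x t) ↔
      (ρ.τ j : ℤ) ≤ t + c ∧ sat ρ φ j ξ := by
  simp only [sat, Function.update_self, Function.update_of_ne hxy,
    sat_update_of_not_freeIn ρ hy, sat_update_of_not_freeIn ρ hx]

theorem sat_freeze_guard_imp (hxy : x ≠ y) (hx : ¬ FreeIn x φ) (hy : ¬ FreeIn y φ) :
    sat ρ (.freeze y (Formula.imp (.le y x c) φ)) j (Function.update ξ x t) ↔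
      ((ρ.τ j : ℤ) ≤ t + c → sat ρ φ j ξ) := by
  simp only [Formula.imp, sat, Function.update_self, Function.update_of_ne hxy,
    sat_update_of_not_freeIn ρ hy, sat_update_of_not_freeIn ρ hx, imp_iff_not_or]

end GuardedFreeze

theorem natCast_tsub_le_iff_le_add {a b w : ℕ} :
    ((a - b : ℕ) : ℕ∞) ≤ w ↔ (a : ℤ) ≤ b + w := by
  rw [Nat.cast_le, Nat.sub_le_iff_le_add']
  omega

theorem untlB_guarded_translation_general (ρ : TSS) (ξ : Env) (i : ℕ) (w : ℕ)
    (φ1 φ2 : Formula) (x y z : ℕ)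
    (hxy : x ≠ y) (hxz : x ≠ z)
    (hx1 : ¬ FreeIn x φ1) (hx2 : ¬ FreeIn x φ2)
    (hy2 : ¬ FreeIn y φ2)
    (hz1 : ¬ FreeIn z φ1) :
    sat ρ (.untlB (w : ℕ∞) φ1 φ2) i ξ ↔
      sat ρ (.freeze x (.untl (.freeze z (Formula.imp (.le z x (w : ℤ)) φ1))
                              (.freeze y (.and (.le y x (w : ℤ)) φ2)))) i ξ := by
  rw [sat, sat, sat]
  simp only [sat_freeze_guard_and ρ hxy hx2 hy2,
    sat_freeze_guard_imp ρ hxz hx1 hz1, natCast_tsub_le_iff_le_add]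
  constructor
  · rintro ⟨j, hij, hw, h2, h1⟩
    exact ⟨j, hij, ⟨hw, h2⟩, fun k hik hkj _ => h1 k hik hkj⟩
  · rintro ⟨j, hij, ⟨hw, h2⟩, h1⟩
    -- the guard is automatic before `j`, since time is monotone
    exact ⟨j, hij, hw, h2, fun k hik hkj =>
      h1 k hik hkj ((Int.ofNat_le.2 (ρ.monotone_τ hkj.le)).trans hw)⟩

/-- The bounded until of TPTLbP is equivalent to its guarded TPTLP
    translation: `φ₁ U_w φ₂  ≡  x.( z.(z ≤ x + w → φ₁) U y.(y ≤ x + w ∧ φ₂) )`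
    for fresh, pairwise distinct variables `x, y, z`. -/
theorem untlB_guarded_translation (ρ : TSS) (ξ : Env) (i : ℕ) (w : ℕ)
    (φ1 φ2 : Formula) (x y z : ℕ)
    (hxy : x ≠ y) (hxz : x ≠ z) (hyz : y ≠ z)
    (hx1 : ¬ FreeIn x φ1) (hx2 : ¬ FreeIn x φ2)
    (hy1 : ¬ FreeIn y φ1) (hy2 : ¬ FreeIn y φ2)
    (hz1 : ¬ FreeIn z φ1) (hz2 : ¬ FreeIn z φ2) :
    sat ρ (.untlB (w : ℕ∞) φ1 φ2) i ξ ↔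
      sat ρ (.freeze x (.untl (.freeze z (Formula.imp (.le z x (w : ℤ)) φ1))
                              (.freeze y (.and (.le y x (w : ℤ)) φ2)))) i ξ :=
  untlB_guarded_translation_general ρ ξ i w φ1 φ2 x y z hxy hxz hx1 hx2 hy2 hz1

end TPTL
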